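/- arXiv:2302.02341 — 9 statements merged into one kernel-verified Lean document; each statement's English description precedes it below -/
import Mathlib

section
/- For a family of density operators ρ_θ with symmetric logarithmic derivative L_θ (i.e. the Hermitian operator satisfying ρ̇_θ = (L_θ ρ_θ + ρ_θ L_θ)/2), the difference between the RLD and SLD quantum Fisher information equals one quarter of the purity of coherence: tr(ρ_θ^{-1} |ρ̇_θ|²) − tr(L_θ² ρ_θ) = −(1/4) tr(ρ_θ^{-1} [ρ_θ, L_θ]²). -/
open scoped Matrix ComplexOrder

/-- For a smooth family of invertible density operators `ρ θ` with
entrywise derivative `ρdot θ` and symmetric logarithmic derivative `L θ`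
(a Hermitian solution of `ρ̇ = (Lρ + ρL)/2`), the difference between the RLD and
SLD quantum Fisher information equals `-(1/4) tr(ρ⁻¹ [ρ,L]²)`. -/
theorem stmt0 {d : ℕ} (ρ L ρdot : ℝ → Matrix (Fin d) (Fin d) ℂ) (θ : ℝ)
    (hpos : (ρ θ).PosDef) (htr : (ρ θ).trace = 1)
    (hderiv : ∀ i j, HasDerivAt (fun t => ρ t i j) (ρdot θ i j) θ)
    (hLherm : (L θ).IsHermitian)
    (hSLD : ρdot θ = (1 / 2 : ℂ) • (L θ * ρ θ + ρ θ * L θ)) :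
    Matrix.trace ((ρ θ)⁻¹ * ((ρdot θ)ᴴ * ρdot θ)) - Matrix.trace (L θ * L θ * ρ θ)
      = -(1 / 4 : ℂ) * Matrix.trace ((ρ θ)⁻¹ *
          ((ρ θ * L θ - L θ * ρ θ) * (ρ θ * L θ - L θ * ρ θ))) := by
  set X := ρ θ with hX
  set B := L θ with hB
  have hXH : Xᴴ = X := hpos.isHermitian
  have hBH : Bᴴ = B := hLherm
  have hdH : (ρdot θ)ᴴ = ρdot θ := by
    rw [hSLD]
    simp [Matrix.conjTranspose_smul, Matrix.conjTranspose_add, Matrix.conjTranspose_mul,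
      hXH, hBH, add_comm]
  have hinv : X⁻¹ * X = 1 := Matrix.nonsing_inv_mul X hpos.det_pos.ne'.isUnit
  rw [hdH, hSLD]
  have e1 : Matrix.trace (X⁻¹ * B * X * B * X) = Matrix.trace (B * B * X) := by
    rw [Matrix.trace_mul_comm]
    simp only [← Matrix.mul_assoc]
    rw [Matrix.mul_nonsing_inv X hpos.det_pos.ne'.isUnit, Matrix.one_mul,
      Matrix.trace_mul_comm]
    simp only [← Matrix.mul_assoc]
  have e2 : Matrix.trace (X⁻¹ * X * B * B * X) = Matrix.trace (B * B * X) := by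
    rw [hinv, Matrix.one_mul]
  have e3 : Matrix.trace (X⁻¹ * X * B * X * B) = Matrix.trace (B * B * X) := by
    rw [hinv, Matrix.one_mul, Matrix.trace_mul_comm, ← Matrix.mul_assoc]
  simp only [Matrix.mul_add, Matrix.add_mul, Matrix.mul_sub, Matrix.sub_mul,
    Matrix.smul_mul, Matrix.mul_smul, Matrix.trace_add, Matrix.trace_sub,
    Matrix.trace_smul, smul_eq_mul, ← Matrix.mul_assoc, smul_smul]
  rw [e1, e2, e3]
  ring
end

section
/- Let ρ be an invertible density operator and Φ† a unital completely positive map. Define V(A) = Φ†(A·Φ(ρ)^{-1/2-it})·ρ^{1/2+it} for a fixed real t, where Φ is the (trace-preserving) adjoint of Φ†. Then V*V ≤ I as operators on the Hilbert–Schmidt space, i.e. ‖V(A)‖₂ ≤ ‖A‖₂ for all matrices A. -/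
open scoped Matrix ComplexOrder

/-- The map `V(A) = Φ†(A · Φ(ρ)^{-1/2-it}) · ρ^{1/2+it}`, expressed via Kraus
operators `K i` of the channel `Φ` (so `Φ†(B) = ∑ i, (K i)ᴴ B (K i)`), where
`ρs = ρ^{1/2}`, `τs = Φ(ρ)^{1/2}`, and `u = ρ^{it}`, `v = Φ(ρ)^{it}` are unitaries
commuting with `ρs`, `τs` respectively, so that `ρ^{1/2+it} = ρs * u` and
`Φ(ρ)^{-1/2-it} = τs⁻¹ * vᴴ`. -/
noncomputable def Vmap {n m k : ℕ} (K : Fin k → Matrix (Fin m) (Fin n) ℂ)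
    (ρs : Matrix (Fin n) (Fin n) ℂ) (τs : Matrix (Fin m) (Fin m) ℂ)
    (u : Matrix (Fin n) (Fin n) ℂ) (v : Matrix (Fin m) (Fin m) ℂ)
    (A : Matrix (Fin m) (Fin m) ℂ) : Matrix (Fin n) (Fin n) ℂ :=
  (∑ i, (K i)ᴴ * (A * (τs⁻¹ * vᴴ)) * K i) * (ρs * u)

/-- The real part of `tr (Xᴴ X)` is nonnegative. -/
lemma trace_conjTranspose_mul_self_re_nonneg {p q : ℕ}
    (X : Matrix (Fin p) (Fin q) ℂ) :
    0 ≤ (Matrix.trace (Xᴴ * X)).re := by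
  have h : Matrix.trace (Xᴴ * X) = ∑ j, ∑ i, (starRingEnd ℂ) (X i j) * X i j := by
    simp [Matrix.trace, Matrix.mul_apply, Matrix.conjTranspose_apply, Matrix.diag]
  rw [h]
  rw [Complex.re_sum]
  refine Finset.sum_nonneg fun j _ => ?_
  rw [Complex.re_sum]
  refine Finset.sum_nonneg fun i _ => ?_
  rw [mul_comm, Complex.mul_conj]
  simp [Complex.normSq_nonneg]

/-- for a quantum channel `Φ` (given by Kraus operators, so that its
adjoint `Φ†` is unital and completely positive) and an invertible density
operator `ρ` with `Φ(ρ)` invertible, the map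
`V(A) = Φ†(A·Φ(ρ)^{-1/2-it})·ρ^{1/2+it}` is a contraction on the
Hilbert–Schmidt space: `‖V(A)‖₂ ≤ ‖A‖₂`, i.e. `V*V ≤ I`. -/
theorem stmt2 {n m k : ℕ} (K : Fin k → Matrix (Fin m) (Fin n) ℂ)
    (hK : ∑ i, (K i)ᴴ * K i = 1)
    (ρ : Matrix (Fin n) (Fin n) ℂ) (hρ : ρ.PosDef) (htr : ρ.trace = 1)
    (ρs : Matrix (Fin n) (Fin n) ℂ) (hρs : ρs.PosDef) (hρs2 : ρs * ρs = ρ)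
    (τs : Matrix (Fin m) (Fin m) ℂ) (hτs : τs.PosDef)
    (hτs2 : τs * τs = ∑ i, K i * ρ * (K i)ᴴ)
    (u : Matrix (Fin n) (Fin n) ℂ) (hu : uᴴ * u = 1) (huc : u * ρs = ρs * u)
    (v : Matrix (Fin m) (Fin m) ℂ) (hv : vᴴ * v = 1) (hvc : v * τs = τs * v)
    (A : Matrix (Fin m) (Fin m) ℂ) :
    (Matrix.trace ((Vmap K ρs τs u v A)ᴴ * Vmap K ρs τs u v A)).re
      ≤ (Matrix.trace (Aᴴ * A)).re := by
  -- basic facts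
  have hρsH : ρsᴴ = ρs := hρs.isHermitian
  have hτsH : τsᴴ = τs := hτs.isHermitian
  have hτdet : IsUnit τs.det := hτs.det_pos.ne'.isUnit
  have hτinv : τs⁻¹ * τs = 1 := Matrix.nonsing_inv_mul τs hτdet
  have hτinv' : τs * τs⁻¹ = 1 := Matrix.mul_nonsing_inv τs hτdet
  have hτsiH : (τs⁻¹)ᴴ = τs⁻¹ := by
    rw [Matrix.conjTranspose_nonsing_inv, hτsH]
  have huu : u * uᴴ = 1 := mul_eq_one_comm.mp hu
  have hvv : v * vᴴ = 1 := mul_eq_one_comm.mp hv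
  -- commutation of vᴴ with τs
  have hvcH : vᴴ * τs = τs * vᴴ := by
    have := congrArg Matrix.conjTranspose hvc
    simpa [Matrix.conjTranspose_mul, hτsH] using this.symm
  set B := A * (τs⁻¹ * vᴴ) with hB
  set T := ∑ i, (K i)ᴴ * B * K i with hT
  have hVmap : Vmap K ρs τs u v A = T * (ρs * u) := rfl
  have hTH : Tᴴ = ∑ i, (K i)ᴴ * Bᴴ * K i := by
    rw [hT, Matrix.conjTranspose_sum]
    congr 1; funext i
    simp [Matrix.conjTranspose_mul, Matrix.mul_assoc]
  -- Schwarz-type identity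
  set S := ∑ i, (B * K i - K i * T)ᴴ * (B * K i - K i * T) with hS
  have hkey : S = (∑ i, (K i)ᴴ * (Bᴴ * B) * K i) - Tᴴ * T := by
    have expand : ∀ i : Fin k,
        (B * K i - K i * T)ᴴ * (B * K i - K i * T)
          = (K i)ᴴ * (Bᴴ * B) * K i - ((K i)ᴴ * Bᴴ * K i) * T
            - Tᴴ * ((K i)ᴴ * B * K i) + Tᴴ * ((K i)ᴴ * K i) * T := by
      intro i
      simp only [Matrix.conjTranspose_sub, Matrix.conjTranspose_mul,
        Matrix.sub_mul, Matrix.mul_sub, Matrix.mul_assoc]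
      abel
    rw [hS]
    calc (∑ i, (B * K i - K i * T)ᴴ * (B * K i - K i * T))
        = (∑ i, (K i)ᴴ * (Bᴴ * B) * K i) - (∑ i, (K i)ᴴ * Bᴴ * K i) * T
            - Tᴴ * (∑ i, (K i)ᴴ * B * K i) + Tᴴ * (∑ i, (K i)ᴴ * K i) * T := by
          simp only [expand, Finset.sum_sub_distrib, Finset.sum_add_distrib,
            Finset.sum_mul, Finset.mul_sum]
      _ = (∑ i, (K i)ᴴ * (Bᴴ * B) * K i) - Tᴴ * T := by
          rw [← hTH, ← hT, hK, mul_one]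
          abel
  -- the LHS trace equals tr(ρs Tᴴ T ρs)
  have hL : Matrix.trace ((Vmap K ρs τs u v A)ᴴ * Vmap K ρs τs u v A)
      = Matrix.trace (ρs * (Tᴴ * T) * ρs) := by
    rw [hVmap]
    have : (T * (ρs * u))ᴴ * (T * (ρs * u)) = uᴴ * (ρs * (Tᴴ * T) * ρs) * u := by
      simp [Matrix.conjTranspose_mul, hρsH, Matrix.mul_assoc]
    rw [this, Matrix.trace_mul_cycle, ← Matrix.mul_assoc, huu, Matrix.one_mul]
  -- tr(ρs S ρs) has nonnegative real part
  have hSnonneg : 0 ≤ (Matrix.trace (ρs * S * ρs)).re := by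
    have : ρs * S * ρs = ∑ i, ((B * K i - K i * T) * ρs)ᴴ * ((B * K i - K i * T) * ρs) := by
      rw [hS, Finset.mul_sum, Finset.sum_mul]
      congr 1; funext i
      simp [Matrix.conjTranspose_mul, hρsH, Matrix.mul_assoc]
    rw [this, Matrix.trace_sum, Complex.re_sum]
    exact Finset.sum_nonneg fun i _ => trace_conjTranspose_mul_self_re_nonneg _
  -- tr(ρs Φ†(BᴴB) ρs) = tr(Aᴴ A)
  have hmain : Matrix.trace (ρs * (∑ i, (K i)ᴴ * (Bᴴ * B) * K i) * ρs)
      = Matrix.trace (Aᴴ * A) := by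
    have h1 : Matrix.trace (ρs * (∑ i, (K i)ᴴ * (Bᴴ * B) * K i) * ρs)
        = Matrix.trace ((Bᴴ * B) * (τs * τs)) := by
      calc Matrix.trace (ρs * (∑ i, (K i)ᴴ * (Bᴴ * B) * K i) * ρs)
          = Matrix.trace (ρs * (ρs * (∑ i, (K i)ᴴ * (Bᴴ * B) * K i))) :=
            Matrix.trace_mul_comm _ _
        _ = Matrix.trace ((∑ i, (K i)ᴴ * (Bᴴ * B) * K i) * ρ) := by
            rw [← Matrix.mul_assoc, hρs2, Matrix.trace_mul_comm]
        _ = ∑ i, Matrix.trace ((K i)ᴴ * (Bᴴ * B) * K i * ρ) := by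
            rw [Finset.sum_mul, Matrix.trace_sum]
        _ = ∑ i, Matrix.trace ((Bᴴ * B) * (K i * ρ * (K i)ᴴ)) := by
            refine Finset.sum_congr rfl fun i _ => ?_
            calc Matrix.trace ((K i)ᴴ * (Bᴴ * B) * K i * ρ)
                = Matrix.trace ((K i)ᴴ * ((Bᴴ * B) * (K i * ρ))) := by
                  simp [Matrix.mul_assoc]
              _ = Matrix.trace (((Bᴴ * B) * (K i * ρ)) * (K i)ᴴ) :=
                  Matrix.trace_mul_comm _ _
              _ = Matrix.trace ((Bᴴ * B) * (K i * ρ * (K i)ᴴ)) := by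
                  simp [Matrix.mul_assoc]
        _ = Matrix.trace ((Bᴴ * B) * ∑ i, K i * ρ * (K i)ᴴ) := by
            rw [Finset.mul_sum, Matrix.trace_sum]
        _ = Matrix.trace ((Bᴴ * B) * (τs * τs)) := by rw [hτs2]
    rw [h1]
    have hBH : Bᴴ = v * τs⁻¹ * Aᴴ := by
      simp [hB, Matrix.conjTranspose_mul, hτsiH, Matrix.mul_assoc]
    rw [hBH, hB]
    have hcyc : (v * τs⁻¹ * Aᴴ) * (A * (τs⁻¹ * vᴴ)) * (τs * τs)
        = v * τs⁻¹ * ((Aᴴ * A) * (τs⁻¹ * (vᴴ * (τs * τs)))) := by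
      simp [Matrix.mul_assoc]
    rw [hcyc]
    have hcol : τs⁻¹ * (vᴴ * (τs * τs)) * (v * τs⁻¹) = 1 := by
      have h2 : vᴴ * (τs * τs) = τs * τs * vᴴ := by
        rw [← Matrix.mul_assoc, hvcH, Matrix.mul_assoc, hvcH, Matrix.mul_assoc]
      rw [h2]
      have h3 : τs⁻¹ * (τs * τs * vᴴ) * (v * τs⁻¹)
          = (τs⁻¹ * τs) * (τs * ((vᴴ * v) * τs⁻¹)) := by simp [Matrix.mul_assoc]
      rw [h3, hτinv, hv]
      simp [hτinv']
    calc Matrix.trace (v * τs⁻¹ * ((Aᴴ * A) * (τs⁻¹ * (vᴴ * (τs * τs)))))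
        = Matrix.trace (((Aᴴ * A) * (τs⁻¹ * (vᴴ * (τs * τs)))) * (v * τs⁻¹)) :=
          Matrix.trace_mul_comm _ _
      _ = Matrix.trace ((Aᴴ * A) * ((τs⁻¹ * (vᴴ * (τs * τs))) * (v * τs⁻¹))) := by
          simp [Matrix.mul_assoc]
      _ = Matrix.trace (Aᴴ * A) := by rw [hcol, Matrix.mul_one]
  -- put it together
  have hsplit : Matrix.trace (ρs * (Tᴴ * T) * ρs)
      = Matrix.trace (Aᴴ * A) - Matrix.trace (ρs * S * ρs) := by
    have : Tᴴ * T = (∑ i, (K i)ᴴ * (Bᴴ * B) * K i) - S := by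
      rw [hkey]; abel
    rw [this, Matrix.mul_sub, Matrix.sub_mul, Matrix.trace_sub, hmain]
  rw [hL, hsplit]
  simp only [Complex.sub_re]
  linarith
end

section
/- With V(A) = Φ†(A·Φ(ρ)^{-1/2-it})·ρ^{1/2+it} as above, letting Δ_ρ(X) = ρXρ^{-1} denote the relative modular operator, one has V*Δ_ρV ≤ Δ_{Φ(ρ)} as positive operators on the Hilbert–Schmidt space; equivalently ⟨V(A), Δ_ρ V(A)⟩ ≤ ⟨A, Δ_{Φ(ρ)}(A)⟩ for all A. -/
open scoped Matrix ComplexOrder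


lemma trace_re_nonneg' {a b : Type*} [Fintype a] [Fintype b] (X : Matrix a b ℂ) :
    0 ≤ (Matrix.trace (Xᴴ * X)).re := by
  have : Matrix.trace (Xᴴ * X) = ∑ j, ∑ i, (starRingEnd ℂ) (X i j) * X i j := by
    simp [Matrix.trace, Matrix.mul_apply, Matrix.diag, Matrix.conjTranspose_apply]
  rw [this, Complex.re_sum]
  refine Finset.sum_nonneg fun j _ => ?_
  rw [Complex.re_sum]
  refine Finset.sum_nonneg fun i _ => ?_
  rw [mul_comm, Complex.mul_conj']
  simp [← Complex.ofReal_pow]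

lemma core' {a b : Type*} [Fintype a] [Fintype b] [DecidableEq a] [DecidableEq b]
    (C : Matrix a b ℂ) (Q : Matrix b a ℂ) (h : Qᴴ * Q = 1) :
    (Matrix.trace ((C * Q)ᴴ * (C * Q))).re ≤ (Matrix.trace (Cᴴ * C)).re := by
  set P := Q * Qᴴ with hP
  have hP2 : P * P = P := by
    rw [hP, Matrix.mul_assoc, ← Matrix.mul_assoc Qᴴ, h, Matrix.one_mul]
  have hPH : Pᴴ = P := by simp [hP, Matrix.mul_assoc]
  have h1 : Matrix.trace ((C * Q)ᴴ * (C * Q)) = Matrix.trace (Cᴴ * C * P) := by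
    rw [Matrix.conjTranspose_mul, Matrix.mul_assoc, Matrix.trace_mul_comm,
      Matrix.mul_assoc, Matrix.mul_assoc]
    rw [hP, Matrix.mul_assoc]
  have h2 : Matrix.trace (Cᴴ * C) - Matrix.trace (Cᴴ * C * P)
      = Matrix.trace ((C - C * P)ᴴ * (C - C * P)) := by
    rw [Matrix.conjTranspose_sub, Matrix.sub_mul, Matrix.mul_sub, Matrix.mul_sub,
      Matrix.trace_sub, Matrix.trace_sub, Matrix.trace_sub]
    rw [Matrix.conjTranspose_mul, hPH]
    have e1 : Matrix.trace (P * Cᴴ * C) = Matrix.trace (Cᴴ * C * P) := by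
      rw [Matrix.mul_assoc, Matrix.trace_mul_comm]
    have e2 : Matrix.trace (Cᴴ * (C * P)) = Matrix.trace (Cᴴ * C * P) := by
      rw [Matrix.mul_assoc]
    have e3 : Matrix.trace (P * Cᴴ * (C * P)) = Matrix.trace (Cᴴ * C * P) := by
      rw [Matrix.mul_assoc P Cᴴ, ← Matrix.mul_assoc Cᴴ C P, Matrix.trace_mul_comm,
        Matrix.mul_assoc (Cᴴ * C) P P, hP2]
    rw [e1, e2, e3]
    ring
  have h3 := trace_re_nonneg' (C - C * P)
  have h4 := congrArg Complex.re h2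
  rw [Complex.sub_re] at h4
  rw [h1]
  linarith

lemma comm_inv' {n : Type*} [Fintype n] [DecidableEq n] {a b : Matrix n n ℂ}
    (h : a * b = b * a) (hb' : b⁻¹ * b = 1) (hb : b * b⁻¹ = 1) :
    a * b⁻¹ = b⁻¹ * a := by
  calc a * b⁻¹ = (b⁻¹ * b) * (a * b⁻¹) := by rw [hb', Matrix.one_mul]
    _ = b⁻¹ * ((b * a) * b⁻¹) := by simp only [Matrix.mul_assoc]
    _ = b⁻¹ * ((a * b) * b⁻¹) := by rw [h]
    _ = b⁻¹ * (a * (b * b⁻¹)) := by simp only [Matrix.mul_assoc]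
    _ = b⁻¹ * a := by rw [hb, Matrix.mul_one]

lemma lhs_eq' {n : ℕ} (M ρ ρs u : Matrix (Fin n) (Fin n) ℂ)
    (hρs2 : ρs * ρs = ρ) (hρH : ρsᴴ = ρs)
    (hu' : u * uᴴ = 1) (huc : u * ρs = ρs * u)
    (hinv : ρ * ρ⁻¹ = 1) (hinv' : ρ⁻¹ * ρ = 1) :
    Matrix.trace ((M * (ρs * u))ᴴ * (ρ * (M * (ρs * u)) * ρ⁻¹))
      = Matrix.trace (Mᴴ * (ρ * M)) := by
  have hcρ : u * ρ = ρ * u := by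
    rw [← hρs2]
    calc u * (ρs * ρs) = (u * ρs) * ρs := (Matrix.mul_assoc _ _ _).symm
      _ = (ρs * u) * ρs := by rw [huc]
      _ = ρs * (u * ρs) := Matrix.mul_assoc _ _ _
      _ = ρs * (ρs * u) := by rw [huc]
      _ = ρs * ρs * u := (Matrix.mul_assoc _ _ _).symm
  have hcρi : u * ρ⁻¹ = ρ⁻¹ * u := comm_inv' hcρ hinv' hinv
  have hcρsρ : ρs * ρ = ρ * ρs := by
    rw [← hρs2, Matrix.mul_assoc]
  have hcρsi : ρs * ρ⁻¹ = ρ⁻¹ * ρs := comm_inv' hcρsρ hinv' hinv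
  have key : ρs * (ρ⁻¹ * ρs) = 1 := by
    rw [← Matrix.mul_assoc, hcρsi, Matrix.mul_assoc, hρs2, hinv']
  calc Matrix.trace ((M * (ρs * u))ᴴ * (ρ * (M * (ρs * u)) * ρ⁻¹))
      = Matrix.trace (uᴴ * (ρs * (Mᴴ * (ρ * (M * (ρs * (u * ρ⁻¹))))))) := by
        simp only [Matrix.conjTranspose_mul, hρH, Matrix.mul_assoc]
    _ = Matrix.trace ((ρs * (Mᴴ * (ρ * (M * (ρs * (ρ⁻¹ * u)))))) * uᴴ) := by
        rw [hcρi, Matrix.trace_mul_comm]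
    _ = Matrix.trace (ρs * (Mᴴ * (ρ * (M * (ρs * ρ⁻¹))))) := by
        simp only [Matrix.mul_assoc, hu', Matrix.mul_one]
    _ = Matrix.trace ((Mᴴ * (ρ * (M * (ρs * ρ⁻¹)))) * ρs) := Matrix.trace_mul_comm _ _
    _ = Matrix.trace (Mᴴ * (ρ * (M * (ρs * (ρ⁻¹ * ρs))))) := by
        simp only [Matrix.mul_assoc]
    _ = Matrix.trace (Mᴴ * (ρ * M)) := by rw [key, Matrix.mul_one]

lemma rhs_eq' {m : ℕ} (A σ τs v : Matrix (Fin m) (Fin m) ℂ)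
    (hτ2 : τs * τs = σ) (hτH : τsᴴ = τs) (hv : vᴴ * v = 1) :
    Matrix.trace (Aᴴ * (σ * A * σ⁻¹))
      = Matrix.trace ((A * (τs⁻¹ * vᴴ))ᴴ * (σ * (A * (τs⁻¹ * vᴴ)))) := by
  have hiH : (τs⁻¹)ᴴ = τs⁻¹ := by
    rw [Matrix.conjTranspose_nonsing_inv, hτH]
  have hσi : σ⁻¹ = τs⁻¹ * τs⁻¹ := by
    rw [← hτ2, Matrix.mul_inv_rev]
  have main : Matrix.trace ((A * (τs⁻¹ * vᴴ))ᴴ * (σ * (A * (τs⁻¹ * vᴴ))))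
      = Matrix.trace (Aᴴ * (σ * A * σ⁻¹)) := by
    calc Matrix.trace ((A * (τs⁻¹ * vᴴ))ᴴ * (σ * (A * (τs⁻¹ * vᴴ))))
        = Matrix.trace (v * (τs⁻¹ * (Aᴴ * (σ * (A * (τs⁻¹ * vᴴ)))))) := by
          simp only [Matrix.conjTranspose_mul, hiH, Matrix.conjTranspose_conjTranspose,
            Matrix.mul_assoc]
      _ = Matrix.trace ((τs⁻¹ * (Aᴴ * (σ * (A * τs⁻¹)))) * (vᴴ * v)) := by
          rw [Matrix.trace_mul_comm]
          simp only [Matrix.mul_assoc]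
      _ = Matrix.trace ((Aᴴ * (σ * (A * τs⁻¹))) * τs⁻¹) := by
          rw [hv, Matrix.mul_one, Matrix.trace_mul_comm]
      _ = Matrix.trace (Aᴴ * (σ * A * σ⁻¹)) := by
        rw [hσi]
        simp only [Matrix.mul_assoc]
  exact main.symm

lemma mid' {n m k : ℕ} (K : Fin k → Matrix (Fin m) (Fin n) ℂ)
    (hK : ∑ i, (K i)ᴴ * K i = 1)
    (B : Matrix (Fin m) (Fin m) ℂ) (ρ ρs : Matrix (Fin n) (Fin n) ℂ)
    (hρs2 : ρs * ρs = ρ) (hρH : ρsᴴ = ρs) :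
    (Matrix.trace ((∑ i, (K i)ᴴ * B * K i)ᴴ * (ρ * (∑ i, (K i)ᴴ * B * K i)))).re
      ≤ (Matrix.trace (Bᴴ * ((∑ i, K i * ρ * (K i)ᴴ) * B))).re := by
  set M : Matrix (Fin n) (Fin n) ℂ := ∑ i, (K i)ᴴ * B * K i with hM
  set C' : Matrix (Fin n) (Fin k × Fin m) ℂ :=
    Matrix.of fun x p => (ρs * (K p.1)ᴴ * B) x p.2 with hC'
  set Q : Matrix (Fin k × Fin m) (Fin n) ℂ :=
    Matrix.of fun p y => K p.1 p.2 y with hQ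
  have c2 : Qᴴ * Q = 1 := by
    ext x y
    rw [← hK]
    simp [Matrix.mul_apply, Matrix.conjTranspose_apply, Matrix.sum_apply,
      Fintype.sum_prod_type, hQ]
  have c1 : C' * Q = ρs * M := by
    have e1 : C' * Q = ∑ i, (ρs * (K i)ᴴ * B) * K i := by
      ext x y
      simp [Matrix.mul_apply, Matrix.sum_apply, Fintype.sum_prod_type, hC', hQ,
        Finset.sum_mul]
    have e2 : ρs * M = ∑ i, (ρs * (K i)ᴴ * B) * K i := by
      rw [hM, Finset.mul_sum]
      exact Finset.sum_congr rfl fun i _ => by simp only [Matrix.mul_assoc]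
    rw [e1, e2]
  have c4 : Matrix.trace (Mᴴ * (ρ * M)) = Matrix.trace ((C' * Q)ᴴ * (C' * Q)) := by
    rw [c1]
    simp only [Matrix.conjTranspose_mul, hρH, Matrix.mul_assoc]
    rw [← Matrix.mul_assoc ρs ρs M, hρs2]
  have c3a : Matrix.trace (C'ᴴ * C')
      = ∑ i, Matrix.trace ((ρs * (K i)ᴴ * B)ᴴ * (ρs * (K i)ᴴ * B)) := by
    have e : C' * C'ᴴ = ∑ i, (ρs * (K i)ᴴ * B) * (ρs * (K i)ᴴ * B)ᴴ := by
      ext x y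
      simp [Matrix.mul_apply, Matrix.sum_apply, Matrix.conjTranspose_apply,
        Fintype.sum_prod_type, hC']
      refine Finset.sum_congr rfl fun i _ => Finset.sum_congr rfl fun z _ => ?_
      congr 1
      refine Finset.sum_congr rfl fun w _ => ?_
      rw [mul_comm]
      congr 1
      exact Finset.sum_congr rfl fun t _ => mul_comm _ _
    rw [Matrix.trace_mul_comm, e, Matrix.trace_sum]
    exact Finset.sum_congr rfl fun i _ => Matrix.trace_mul_comm _ _
  have c3b : ∀ i, Matrix.trace ((ρs * (K i)ᴴ * B)ᴴ * (ρs * (K i)ᴴ * B))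
      = Matrix.trace (Bᴴ * (K i * ρ * (K i)ᴴ * B)) := by
    intro i
    simp only [Matrix.conjTranspose_mul, hρH, Matrix.conjTranspose_conjTranspose,
      Matrix.mul_assoc]
    rw [← Matrix.mul_assoc ρs ρs, hρs2]
  have c3c : Matrix.trace (Bᴴ * ((∑ i, K i * ρ * (K i)ᴴ) * B))
      = ∑ i, Matrix.trace (Bᴴ * (K i * ρ * (K i)ᴴ * B)) := by
    rw [Finset.sum_mul, Finset.mul_sum, Matrix.trace_sum]
  have c3 : Matrix.trace (C'ᴴ * C') = Matrix.trace (Bᴴ * ((∑ i, K i * ρ * (K i)ᴴ) * B)) := by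
    rw [c3a, c3c]
    exact Finset.sum_congr rfl fun i _ => c3b i
  rw [congrArg Complex.re c4, ← congrArg Complex.re c3]
  exact core' C' Q c2

/-- with `V` as above and `Δ_σ(X) = σXσ⁻¹` the relative modular
operator, one has `V* Δ_ρ V ≤ Δ_{Φ(ρ)}` on the Hilbert–Schmidt space, i.e.
`⟨V(A), Δ_ρ V(A)⟩ ≤ ⟨A, Δ_{Φ(ρ)}(A)⟩` for all `A`. -/
theorem stmt3 {n m k : ℕ} (K : Fin k → Matrix (Fin m) (Fin n) ℂ)
    (hK : ∑ i, (K i)ᴴ * K i = 1)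
    (ρ : Matrix (Fin n) (Fin n) ℂ) (hρ : ρ.PosDef) (htr : ρ.trace = 1)
    (ρs : Matrix (Fin n) (Fin n) ℂ) (hρs : ρs.PosDef) (hρs2 : ρs * ρs = ρ)
    (τs : Matrix (Fin m) (Fin m) ℂ) (hτs : τs.PosDef)
    (hτs2 : τs * τs = ∑ i, K i * ρ * (K i)ᴴ)
    (u : Matrix (Fin n) (Fin n) ℂ) (hu : uᴴ * u = 1) (huc : u * ρs = ρs * u)
    (v : Matrix (Fin m) (Fin m) ℂ) (hv : vᴴ * v = 1) (hvc : v * τs = τs * v)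
    (A : Matrix (Fin m) (Fin m) ℂ) :
    (Matrix.trace ((Vmap K ρs τs u v A)ᴴ * (ρ * Vmap K ρs τs u v A * ρ⁻¹))).re
      ≤ (Matrix.trace (Aᴴ * ((∑ i, K i * ρ * (K i)ᴴ) * A * (∑ i, K i * ρ * (K i)ᴴ)⁻¹))).re := by
  have hρH : ρsᴴ = ρs := hρs.isHermitian
  have hτH : τsᴴ = τs := hτs.isHermitian
  have hu' : u * uᴴ = 1 := mul_eq_one_comm.mp hu
  have hdet : IsUnit ρ.det := (Matrix.isUnit_iff_isUnit_det ρ).mp hρ.isUnit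
  have hinv : ρ * ρ⁻¹ = 1 := Matrix.mul_nonsing_inv ρ hdet
  have hinv' : ρ⁻¹ * ρ = 1 := Matrix.nonsing_inv_mul ρ hdet
  set σ : Matrix (Fin m) (Fin m) ℂ := ∑ i, K i * ρ * (K i)ᴴ with hσ
  set B : Matrix (Fin m) (Fin m) ℂ := A * (τs⁻¹ * vᴴ) with hB
  set M : Matrix (Fin n) (Fin n) ℂ := ∑ i, (K i)ᴴ * B * K i with hM
  have hV : Vmap K ρs τs u v A = M * (ρs * u) := rfl
  rw [hV]
  have l := lhs_eq' M ρ ρs u hρs2 hρH hu' huc hinv hinv'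
  have r := rhs_eq' A σ τs v hτs2 hτH hv
  rw [congrArg Complex.re l, congrArg Complex.re r]
  exact mid' K hK B ρ ρs hρs2 hρH
end

section
/- Let Δ, Δ̃, V be positive linear maps on (between) Hilbert spaces with V*V ≤ I and V*ΔV ≤ Δ̃. Then for any s ≥ 0 and any vector h: ⟨h, (s+Δ)^{-1}h⟩ − ⟨h, V(s+Δ̃)^{-1}V*h⟩ ≥ ⟨h_s, (s+Δ)h_s⟩, where h_s = (s+Δ)^{-1}h − V(s+Δ̃)^{-1}V*h. -/
/-!
Write `A = s + Δ`, `x = A⁻¹h` and `u = (s + Δt)⁻¹V*h`. Expanding the quadratic form of `A` at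
`x - Vu` gives `⟨h, x⟩ - 2 Re⟨h, Vu⟩ + ⟨Vu, A Vu⟩`. The hypotheses say
`V*AV = s V*V + V*ΔV ≤ s + Δt`, so `⟨Vu, A Vu⟩ ≤ ⟨u, (s + Δt)u⟩ = Re⟨h, Vu⟩`.
-/

open ContinuousLinearMap RCLike
open scoped InnerProductSpace ComplexOrder

namespace ContinuousLinearMap

variable {𝕜 E F : Type*} [RCLike 𝕜]
  [NormedAddCommGroup E] [InnerProductSpace 𝕜 E]

theorem re_inner_sub_apply_sub_of_apply_eq {A : E →L[𝕜] E} (hA : (A : E →ₗ[𝕜] E).IsSymmetric)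
    {x h : E} (hx : A x = h) (y : E) :
    re ⟪x - y, A (x - y)⟫_𝕜 = re ⟪h, x⟫_𝕜 - 2 * re ⟪h, y⟫_𝕜 + re ⟪y, A y⟫_𝕜 := by
  have hxy : ⟪x, A y⟫_𝕜 = ⟪h, y⟫_𝕜 := by rw [← hx]; exact (hA x y).symm
  rw [map_sub, inner_sub_left, inner_sub_right, inner_sub_right, hx, hxy]
  simp only [map_sub]
  rw [inner_re_symm x h, inner_re_symm y h]
  ring

variable [CompleteSpace E] [NormedAddCommGroup F] [InnerProductSpace 𝕜 F] [CompleteSpace F]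

theorem re_inner_apply_self_le_of_isPositive_sub_adjoint_comp {A : E →L[𝕜] E} {B : F →L[𝕜] F}
    {V : F →L[𝕜] E} (hB : (B - adjoint V ∘L A ∘L V).IsPositive) {u : F} {h : E}
    (hu : B u = adjoint V h) :
    re ⟪V u, A (V u)⟫_𝕜 ≤ re ⟪h, V u⟫_𝕜 := by
  have hnonneg := hB.re_inner_nonneg_right u
  rw [sub_apply, inner_sub_right, map_sub, hu, comp_apply, comp_apply,
    adjoint_inner_right, adjoint_inner_right, inner_re_symm (V u) h] at hnonneg
  linarith

theorem re_inner_sub_apply_sub_le {A : E →L[𝕜] E} {B : F →L[𝕜] F} {V : F →L[𝕜] E}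
    (hA : (A : E →ₗ[𝕜] E).IsSymmetric) (hB : (B - adjoint V ∘L A ∘L V).IsPositive)
    {x h : E} (hx : A x = h) {u : F} (hu : B u = adjoint V h) :
    re ⟪x - V u, A (x - V u)⟫_𝕜 ≤ re ⟪h, x⟫_𝕜 - re ⟪h, V u⟫_𝕜 := by
  rw [re_inner_sub_apply_sub_of_apply_eq hA hx]
  linarith [re_inner_apply_self_le_of_isPositive_sub_adjoint_comp hB hu]

theorem smul_one_add_sub_adjoint_comp_smul_one_add (c : 𝕜) (Δ : E →L[𝕜] E) (Δt : F →L[𝕜] F)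
    (V : F →L[𝕜] E) :
    (c • 1 + Δt) - adjoint V ∘L (c • 1 + Δ) ∘L V
      = c • (1 - adjoint V ∘L V) + (Δt - adjoint V ∘L Δ ∘L V) := by
  simp only [add_comp, smul_comp, comp_add, comp_smul, one_def, id_comp, smul_sub]
  abel

end ContinuousLinearMap

theorem stmt4_general {H₁ H₂ : Type*}
    [NormedAddCommGroup H₁] [InnerProductSpace ℂ H₁] [FiniteDimensional ℂ H₁]
    [NormedAddCommGroup H₂] [InnerProductSpace ℂ H₂] [FiniteDimensional ℂ H₂]
    (Δ : H₁ →L[ℂ] H₁) (Δt : H₂ →L[ℂ] H₂) (V : H₂ →L[ℂ] H₁)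
    (hΔ : Δ.IsPositive)
    (hVV : ((1 : H₂ →L[ℂ] H₂) - (ContinuousLinearMap.adjoint V).comp V).IsPositive)
    (hVΔV : (Δt - (ContinuousLinearMap.adjoint V).comp (Δ.comp V)).IsPositive)
    (s : ℝ) (hs : 0 ≤ s)
    (R : H₁ →L[ℂ] H₁)
    (hR : ((s : ℂ) • (1 : H₁ →L[ℂ] H₁) + Δ).comp R = 1)
    (Rt : H₂ →L[ℂ] H₂)
    (hRt : ((s : ℂ) • (1 : H₂ →L[ℂ] H₂) + Δt).comp Rt = 1)
    (h : H₁) :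
    (inner ℂ ((R h - V (Rt (ContinuousLinearMap.adjoint V h)))) 
        (((s : ℂ) • (1 : H₁ →L[ℂ] H₁) + Δ)
          (R h - V (Rt (ContinuousLinearMap.adjoint V h)))) : ℂ).re
      ≤ (inner ℂ h (R h) : ℂ).re - (inner ℂ h (V (Rt (ContinuousLinearMap.adjoint V h))) : ℂ).re := by
  have hs' : 0 ≤ (s : ℂ) := Complex.zero_le_real.mpr hs
  have hA : ((s : ℂ) • (1 : H₁ →L[ℂ] H₁) + Δ).IsPositive :=
    (isPositive_one.smul_of_nonneg hs').add hΔ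
  have hB : (((s : ℂ) • (1 : H₂ →L[ℂ] H₂) + Δt)
      - adjoint V ∘L ((s : ℂ) • (1 : H₁ →L[ℂ] H₁) + Δ) ∘L V).IsPositive := by
    rw [smul_one_add_sub_adjoint_comp_smul_one_add]
    exact (hVV.smul_of_nonneg hs').add hVΔV
  exact re_inner_sub_apply_sub_le hA.isSymmetric hB (DFunLike.congr_fun hR h)
    (DFunLike.congr_fun hRt _)

/-- let `Δ`, `Δt` be positive operators on finite-dimensional
Hilbert spaces, `V` a linear map with `V*V ≤ I` and `V*ΔV ≤ Δt`. Given the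
(two-sided) inverses `R = (s+Δ)⁻¹` and `Rt = (s+Δt)⁻¹` for `s ≥ 0`, and any
vector `h`, with `h_s = (s+Δ)⁻¹h − V(s+Δt)⁻¹V*h`, one has
`⟨h,(s+Δ)⁻¹h⟩ − ⟨h, V(s+Δt)⁻¹V*h⟩ ≥ ⟨h_s, (s+Δ)h_s⟩`. -/
theorem stmt4 {H₁ H₂ : Type*}
    [NormedAddCommGroup H₁] [InnerProductSpace ℂ H₁] [FiniteDimensional ℂ H₁]
    [NormedAddCommGroup H₂] [InnerProductSpace ℂ H₂] [FiniteDimensional ℂ H₂]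
    (Δ : H₁ →L[ℂ] H₁) (Δt : H₂ →L[ℂ] H₂) (V : H₂ →L[ℂ] H₁)
    (hΔ : Δ.IsPositive) (hΔt : Δt.IsPositive)
    (hVV : ((1 : H₂ →L[ℂ] H₂) - (ContinuousLinearMap.adjoint V).comp V).IsPositive)
    (hVΔV : (Δt - (ContinuousLinearMap.adjoint V).comp (Δ.comp V)).IsPositive)
    (s : ℝ) (hs : 0 ≤ s)
    (R : H₁ →L[ℂ] H₁)
    (hR : ((s : ℂ) • (1 : H₁ →L[ℂ] H₁) + Δ).comp R = 1)
    (hR' : R.comp ((s : ℂ) • (1 : H₁ →L[ℂ] H₁) + Δ) = 1)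
    (Rt : H₂ →L[ℂ] H₂)
    (hRt : ((s : ℂ) • (1 : H₂ →L[ℂ] H₂) + Δt).comp Rt = 1)
    (hRt' : Rt.comp ((s : ℂ) • (1 : H₂ →L[ℂ] H₂) + Δt) = 1)
    (h : H₁) :
    (inner ℂ ((R h - V (Rt (ContinuousLinearMap.adjoint V h)))) 
        (((s : ℂ) • (1 : H₁ →L[ℂ] H₁) + Δ)
          (R h - V (Rt (ContinuousLinearMap.adjoint V h)))) : ℂ).re
      ≤ (inner ℂ h (R h) : ℂ).re - (inner ℂ h (V (Rt (ContinuousLinearMap.adjoint V h))) : ℂ).re :=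
  stmt4_general Δ Δt V hΔ hVV hVΔV s hs R hR Rt hRt h
end

section
/- For any matrix X and any invertible density operator ρ, the trace norm of X is bounded by the Bures metric: ‖X‖₁² ≤ 2⟨X, (L_ρ + R_ρ)^{-1}X⟩, where L_ρ(A) = ρA and R_ρ(A) = Aρ, and ⟨·,·⟩ is the Hilbert–Schmidt inner product. -/
open scoped Matrix ComplexOrder

/-- The trace (Schatten-1) norm `‖X‖₁ = tr √(XᴴX)`. -/
noncomputable def traceNorm {d : ℕ} (X : Matrix (Fin d) (Fin d) ℂ) : ℝ :=
  (((Matrix.posSemidef_conjTranspose_mul_self X).1.eigenvectorUnitary : Matrix (Fin d) (Fin d) ℂ) *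
      Matrix.diagonal (((↑) : ℝ → ℂ) ∘ Real.sqrt ∘ (Matrix.posSemidef_conjTranspose_mul_self X).1.eigenvalues) *
      (star (Matrix.posSemidef_conjTranspose_mul_self X).1.eigenvectorUnitary :
        Matrix (Fin d) (Fin d) ℂ)).trace.re

/-!
Let `W = X |X|⁺` be the partial isometry of the polar decomposition of `X`, so that
`‖X‖₁ = Re tr(Wᴴ X)` and both `WᴴW` and `WWᴴ` are orthogonal projections. Substituting
`X = ρY + Yρ` and applying Cauchy–Schwarz to the semi-inner product `⟪A, B⟫ = tr(B ρ Aᴴ)`,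
together with `tr(ρ P) ≤ tr ρ` for every projection `P`, gives
`‖X‖₁ ≤ √(tr ρ) (√a + √b)` with `a = tr(Yᴴ ρ Y)` and `b = tr(Y ρ Yᴴ)`. Since
`Re tr(Xᴴ Y) = a + b`, the bound follows from `(√a + √b)² ≤ 2 (a + b)`.
-/

namespace Matrix
variable {m n 𝕜 : Type*} [Fintype m] [Fintype n] [RCLike 𝕜]
open RCLike

lemma PosSemidef.re_trace_nonneg {M : Matrix n n 𝕜} (hM : M.PosSemidef) : 0 ≤ re M.trace :=
  (RCLike.nonneg_iff.mp hM.trace_nonneg).1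

lemma PosSemidef.re_trace_mul_mul_conjTranspose_le {M : Matrix n n 𝕜} (hM : M.PosSemidef)
    (A B : Matrix n n 𝕜) :
    re (B * M * Aᴴ).trace ≤ √(re (A * M * Aᴴ).trace) * √(re (B * M * Bᴴ).trace) := by
  let := M.toMatrixSeminormedAddCommGroup hM
  let := M.toMatrixInnerProductSpace hM
  exact re_inner_le_norm A B

lemma PosSemidef.re_trace_mul_le_of_isStarProjection [DecidableEq n] {M Q : Matrix n n 𝕜}
    (hM : M.PosSemidef) (hQ : IsStarProjection Q) : re (M * Q).trace ≤ re M.trace := by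
  have hQc : IsStarProjection (1 - Q) := hQ.one_sub
  have := (hM.mul_mul_conjTranspose_same (1 - Q)).re_trace_nonneg
  rwa [← star_eq_conjTranspose, hQc.isSelfAdjoint.star_eq, trace_mul_cycle,
    hQc.isIdempotentElem.eq, Matrix.sub_mul, Matrix.one_mul, trace_sub, trace_mul_comm Q,
    map_sub, sub_nonneg] at this

lemma PosSemidef.re_trace_mul_mul_conjTranspose_le_of_isStarProjection [DecidableEq n]
    {M W : Matrix n n 𝕜} (hM : M.PosSemidef) (hW : IsStarProjection (Wᴴ * W))
    (B : Matrix n n 𝕜) :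
    re (B * M * Wᴴ).trace ≤ √(re M.trace) * √(re (B * M * Bᴴ).trace) := by
  refine (hM.re_trace_mul_mul_conjTranspose_le W B).trans ?_
  refine mul_le_mul_of_nonneg_right (Real.sqrt_le_sqrt ?_) (Real.sqrt_nonneg _)
  rw [trace_mul_cycle, trace_mul_comm]
  exact hM.re_trace_mul_le_of_isStarProjection hW

lemma mul_conjTranspose_mul_self_of_isStarProjection [DecidableEq n] {W : Matrix m n 𝕜}
    (h : IsStarProjection (Wᴴ * W)) : W * (Wᴴ * W) = W := by
  have hQc : (1 - Wᴴ * W)ᴴ = 1 - Wᴴ * W := h.one_sub.isSelfAdjoint.star_eq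
  have : (W * (1 - Wᴴ * W))ᴴ * (W * (1 - Wᴴ * W)) = 0 := by
    rw [conjTranspose_mul, hQc, Matrix.mul_assoc, ← Matrix.mul_assoc Wᴴ,
      h.isIdempotentElem.mul_one_sub_self, Matrix.mul_zero]
  rwa [conjTranspose_mul_self_eq_zero, Matrix.mul_sub, Matrix.mul_one, sub_eq_zero,
    eq_comm] at this

lemma isStarProjection_mul_conjTranspose [DecidableEq n] {W : Matrix m n 𝕜}
    (h : IsStarProjection (Wᴴ * W)) : IsStarProjection (W * Wᴴ) where
  isIdempotentElem := by
    rw [IsIdempotentElem, ← Matrix.mul_assoc, Matrix.mul_assoc W,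
      mul_conjTranspose_mul_self_of_isStarProjection h]
  isSelfAdjoint := by simp [IsSelfAdjoint, star_eq_conjTranspose]

lemma exists_isStarProjection_conjTranspose_mul_eq_cfc_sqrt [DecidableEq n] (X : Matrix m n 𝕜) :
    ∃ W : Matrix m n 𝕜, IsStarProjection (Wᴴ * W) ∧ Wᴴ * X = cfc Real.sqrt (Xᴴ * X) := by
  set A := Xᴴ * X
  have hA : IsSelfAdjoint A := isHermitian_conjTranspose_mul_self X
  have hcont (f : ℝ → ℝ) : ContinuousOn f (spectrum ℝ A) := A.finite_real_spectrum.continuousOn f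
  -- `(√0)⁻¹ = 0`, so `P` is the pseudo-inverse of `|X|`.
  set P := cfc (fun x : ℝ ↦ (√x)⁻¹) A
  have hP : Pᴴ = P := (cfc_predicate _ A : IsSelfAdjoint P).star_eq
  have hPA : P * A = cfc Real.sqrt A := by
    conv_lhs => rw [← cfc_id' ℝ A]
    rw [← cfc_mul _ _ _ (hcont _) (hcont _)]
    simp only [inv_mul_eq_div, Real.div_sqrt]
  have hWW : (X * P)ᴴ * (X * P) = cfc (fun x : ℝ ↦ √x * (√x)⁻¹) A := by
    rw [conjTranspose_mul, hP, Matrix.mul_assoc, ← Matrix.mul_assoc Xᴴ, ← Matrix.mul_assoc, hPA,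
      cfc_mul _ _ _ (hcont _) (hcont _)]
  refine ⟨X * P, ⟨?_, ?_⟩, ?_⟩
  · rw [hWW, IsIdempotentElem, ← cfc_mul _ _ _ (hcont _) (hcont _)]
    simp only [← mul_assoc, mul_inv_mul_cancel]
  · simp [IsSelfAdjoint, star_eq_conjTranspose]
  · rw [conjTranspose_mul, hP, Matrix.mul_assoc, hPA]

open scoped MatrixOrder in
lemma re_trace_cfc_sqrt_nonneg [DecidableEq n] (A : Matrix n n 𝕜) :
    0 ≤ re (cfc Real.sqrt A).trace :=
  (nonneg_iff_posSemidef.mp (cfc_nonneg fun x _ ↦ Real.sqrt_nonneg x)).re_trace_nonneg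

theorem re_trace_cfc_sqrt_sq_le_of_mul_add_mul_eq [DecidableEq n] {ρ X Y : Matrix n n 𝕜}
    (hρ : ρ.PosSemidef) (hY : ρ * Y + Y * ρ = X) :
    re (cfc Real.sqrt (Xᴴ * X)).trace ^ 2 ≤ 2 * re ρ.trace * re (Xᴴ * Y).trace := by
  obtain ⟨W, hW, hWX⟩ := exists_isStarProjection_conjTranspose_mul_eq_cfc_sqrt X
  set a := re (Yᴴ * ρ * Y).trace
  set b := re (Y * ρ * Yᴴ).trace
  have hW' : IsStarProjection (Wᴴᴴ * Wᴴ) := by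
    rw [conjTranspose_conjTranspose]; exact isStarProjection_mul_conjTranspose hW
  have hρY : re (Wᴴ * (ρ * Y)).trace ≤ √(re ρ.trace) * √a := by
    have hconj : (Wᴴ * (ρ * Y)).trace = star (Yᴴ * ρ * W).trace := by
      rw [← trace_conjTranspose]
      simp only [conjTranspose_mul, conjTranspose_conjTranspose, hρ.isHermitian.eq,
        Matrix.mul_assoc]
    have := hρ.re_trace_mul_mul_conjTranspose_le_of_isStarProjection hW' Yᴴ
    simp only [conjTranspose_conjTranspose] at this
    rwa [hconj, star_def, conj_re]
  have hYρ : re (Wᴴ * (Y * ρ)).trace ≤ √(re ρ.trace) * √b := by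
    have := hρ.re_trace_mul_mul_conjTranspose_le_of_isStarProjection hW Y
    rwa [trace_mul_comm] at this
  have hXY : re (Xᴴ * Y).trace = a + b := by
    rw [← hY, conjTranspose_add, conjTranspose_mul, conjTranspose_mul, hρ.isHermitian.eq,
      Matrix.add_mul, trace_add, map_add, Matrix.mul_assoc ρ, trace_mul_comm ρ,
      ← trace_mul_cycle Y ρ Yᴴ]
  have ht : re (cfc Real.sqrt (Xᴴ * X)).trace ≤ √(re ρ.trace) * (√a + √b) := by
    rw [← hWX, ← hY, Matrix.mul_add, trace_add, map_add, mul_add]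
    exact add_le_add hρY hYρ
  have hτ : 0 ≤ re ρ.trace := hρ.re_trace_nonneg
  have ha : 0 ≤ a := (hρ.conjTranspose_mul_mul_same Y).re_trace_nonneg
  have hb : 0 ≤ b := (hρ.mul_mul_conjTranspose_same Y).re_trace_nonneg
  calc re (cfc Real.sqrt (Xᴴ * X)).trace ^ 2 ≤ (√(re ρ.trace) * (√a + √b)) ^ 2 :=
        pow_le_pow_left₀ (re_trace_cfc_sqrt_nonneg _) ht 2
    _ = re ρ.trace * (√a + √b) ^ 2 := by rw [mul_pow, Real.sq_sqrt hτ]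
    _ ≤ re ρ.trace * (2 * (a + b)) := by
        gcongr
        nlinarith [Real.sq_sqrt ha, Real.sq_sqrt hb, sq_nonneg (√a - √b)]
    _ = 2 * re ρ.trace * re (Xᴴ * Y).trace := by rw [hXY]; ring

end Matrix

open Matrix in
lemma traceNorm_eq_re_trace_cfc_sqrt {d : ℕ} (X : Matrix (Fin d) (Fin d) ℂ) :
    traceNorm X = RCLike.re (cfc Real.sqrt (Xᴴ * X)).trace := by
  rw [(isHermitian_conjTranspose_mul_self X).cfc_eq]
  rfl

/-- for any matrix `X` and any invertible density operator `ρ`,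
`‖X‖₁² ≤ 2⟨X, (L_ρ + R_ρ)⁻¹ X⟩`; here `Y = (L_ρ + R_ρ)⁻¹ X` is the solution of
`ρY + Yρ = X`, and `⟨X, Y⟩ = tr(Xᴴ Y)` is the Hilbert–Schmidt inner product. -/
theorem stmt5 {d : ℕ} (ρ X Y : Matrix (Fin d) (Fin d) ℂ)
    (hρ : ρ.PosDef) (htr : ρ.trace = 1)
    (hY : ρ * Y + Y * ρ = X) :
    traceNorm X ^ 2 ≤ 2 * (Matrix.trace (Xᴴ * Y)).re := by
  have := Matrix.re_trace_cfc_sqrt_sq_le_of_mul_add_mul_eq hρ.posSemidef hY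
  rw [← traceNorm_eq_re_trace_cfc_sqrt, htr, RCLike.one_re, mul_one] at this
  exact this
end

section
/- (Abstract saturation of DPI for monotone metrics.) Let J₁, J₂ be positive invertible operators on Hilbert spaces H₁, H₂ and Φ: H₁ → H₂ a linear map with Φ*J₂Φ ≤ J₁. Then for any vector A ∈ H₁: ⟨A, J₁A⟩ − ⟨ΦA, J₂ΦA⟩ ≥ ⟨A − J₁^{-1}Φ*J₂ΦA, J₁(A − J₁^{-1}Φ*J₂ΦA)⟩. -/
/-!
Write `T = Φ† J₂ Φ`, so that `T ≤ J₁`, and `x = J₁⁻¹ T A`. Expanding the left-hand side with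
`J₁ x = T A` reduces the claim to `re ⟪T A, x⟫ ≤ re ⟪T A, A⟫`. This follows by adding the
positivity of `T` at `A - x` to the inequality `re ⟪T x, x⟫ ≤ re ⟪J₁ x, x⟫ = re ⟪T A, x⟫`.
-/

open RCLike
open scoped InnerProductSpace

namespace ContinuousLinearMap

variable {𝕜 E : Type*} [RCLike 𝕜] [NormedAddCommGroup E] [InnerProductSpace 𝕜 E]
  {T J : E →L[𝕜] E}

theorem IsPositive.re_inner_le_of_le_of_apply_eq (hT : T.IsPositive) (hTJ : T ≤ J) {a x : E}
    (hx : J x = T a) : re ⟪T a, x⟫_𝕜 ≤ re ⟪T a, a⟫_𝕜 := by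
  have hTx : re ⟪T x, x⟫_𝕜 ≤ re ⟪T a, x⟫_𝕜 := by
    have := hTJ.re_inner_nonneg_left x
    rwa [sub_apply, inner_sub_left, map_sub, hx, sub_nonneg] at this
  have hsymm : re ⟪T x, a⟫_𝕜 = re ⟪T a, x⟫_𝕜 := by
    rw [hT.inner_left_eq_inner_right, inner_re_symm]
  have := hT.re_inner_nonneg_left (a - x)
  simp only [map_sub, inner_sub_left, inner_sub_right] at this
  linarith

theorem IsPositive.re_inner_sub_le_of_le_of_apply_eq (hT : T.IsPositive) (hTJ : T ≤ J) {a x : E}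
    (hx : J x = T a) : re ⟪a - x, J (a - x)⟫_𝕜 ≤ re ⟪a, J a⟫_𝕜 - re ⟪a, T a⟫_𝕜 := by
  have hJ : J.IsPositive := by simpa using hTJ.add hT
  have hxJa : re ⟪x, J a⟫_𝕜 = re ⟪a, T a⟫_𝕜 := by
    rw [← hJ.inner_left_eq_inner_right, hx, inner_re_symm]
  have hxTa := hT.re_inner_le_of_le_of_apply_eq hTJ hx
  rw [inner_re_symm (T a) x, inner_re_symm (T a) a] at hxTa
  simp only [map_sub, inner_sub_left, inner_sub_right, hx]
  linarith

end ContinuousLinearMap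

open ContinuousLinearMap in
theorem stmt11_general {H₁ H₂ : Type*}
    [NormedAddCommGroup H₁] [InnerProductSpace ℂ H₁] [FiniteDimensional ℂ H₁]
    [NormedAddCommGroup H₂] [InnerProductSpace ℂ H₂] [FiniteDimensional ℂ H₂]
    (J₁ : H₁ →L[ℂ] H₁) (J₂ : H₂ →L[ℂ] H₂) (Φ : H₁ →L[ℂ] H₂)
    (hJ₂ : J₂.IsPositive)
    (K₁ : H₁ →L[ℂ] H₁) (hK₁ : J₁.comp K₁ = 1)
    (hDPI : (J₁ - (ContinuousLinearMap.adjoint Φ).comp (J₂.comp Φ)).IsPositive)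
    (A : H₁) :
    (inner ℂ (A - K₁ (ContinuousLinearMap.adjoint Φ (J₂ (Φ A))))
        (J₁ (A - K₁ (ContinuousLinearMap.adjoint Φ (J₂ (Φ A))))) : ℂ).re
      ≤ (inner ℂ A (J₁ A) : ℂ).re - (inner ℂ (Φ A) (J₂ (Φ A)) : ℂ).re := by
  have hJ₁K₁ : J₁ (K₁ (adjoint Φ (J₂ (Φ A)))) = adjoint Φ (J₂ (Φ A)) := by
    simpa using congr($hK₁ (adjoint Φ (J₂ (Φ A))))
  have key := (hJ₂.adjoint_conj Φ).re_inner_sub_le_of_le_of_apply_eq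
    ((le_def _ _).mpr hDPI) (a := A) hJ₁K₁
  rwa [comp_apply, comp_apply, adjoint_inner_right] at key

/-- abstract saturation of DPI for monotone metrics: let `J₁`,
`J₂` be positive invertible operators on finite-dimensional Hilbert spaces
`H₁`, `H₂` (with `K₁` the inverse of `J₁`) and `Φ : H₁ → H₂` linear with
`Φ*J₂Φ ≤ J₁`. Then for every `A ∈ H₁`, with `B = A − J₁⁻¹Φ*J₂ΦA`,
`⟨A, J₁A⟩ − ⟨ΦA, J₂ΦA⟩ ≥ ⟨B, J₁B⟩`. -/
theorem stmt11 {H₁ H₂ : Type*}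
    [NormedAddCommGroup H₁] [InnerProductSpace ℂ H₁] [FiniteDimensional ℂ H₁]
    [NormedAddCommGroup H₂] [InnerProductSpace ℂ H₂] [FiniteDimensional ℂ H₂]
    (J₁ : H₁ →L[ℂ] H₁) (J₂ : H₂ →L[ℂ] H₂) (Φ : H₁ →L[ℂ] H₂)
    (hJ₁ : J₁.IsPositive) (hJ₂ : J₂.IsPositive)
    (K₁ : H₁ →L[ℂ] H₁) (hK₁ : J₁.comp K₁ = 1) (hK₁' : K₁.comp J₁ = 1)
    (hDPI : (J₁ - (ContinuousLinearMap.adjoint Φ).comp (J₂.comp Φ)).IsPositive)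
    (A : H₁) :
    (inner ℂ (A - K₁ (ContinuousLinearMap.adjoint Φ (J₂ (Φ A))))
        (J₁ (A - K₁ (ContinuousLinearMap.adjoint Φ (J₂ (Φ A))))) : ℂ).re
      ≤ (inner ℂ A (J₁ A) : ℂ).re - (inner ℂ (Φ A) (J₂ (Φ A)) : ℂ).re :=
  stmt11_general J₁ J₂ Φ hJ₂ K₁ hK₁ hDPI A
end

section
/- (Operator Schwarz inequality for channels with invertible reference state.) For Φ a CPTP map, invertible positive ρ, and any matrix A, one has Φ(A*)Φ(ρ)^{-1}Φ(A) ≤ Φ(A* ρ^{-1} A). In particular tr(Φ(A)* Φ(ρ)^{-1} Φ(A)) ≤ tr(A* ρ^{-1} A), i.e. the RLD metric satisfies the data processing inequality. -/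
open scoped Matrix ComplexOrder

open Matrix in
lemma sum_fromBlocks {p q k : ℕ} (a : Fin k → Matrix (Fin p) (Fin p) ℂ)
    (b : Fin k → Matrix (Fin p) (Fin q) ℂ) (c : Fin k → Matrix (Fin q) (Fin p) ℂ)
    (d : Fin k → Matrix (Fin q) (Fin q) ℂ) :
    ∑ i, fromBlocks (a i) (b i) (c i) (d i)
      = fromBlocks (∑ i, a i) (∑ i, b i) (∑ i, c i) (∑ i, d i) := by
  ext (i | i) (j | j) <;> simp [Matrix.sum_apply, Matrix.fromBlocks]

open Matrix in
lemma posSemidef_sum {p : Type*} [Fintype p] [DecidableEq p] {k : ℕ}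
    (f : Fin k → Matrix p p ℂ)
    (h : ∀ i, (f i).PosSemidef) : (∑ i, f i).PosSemidef := by
  rw [posSemidef_iff_dotProduct_mulVec]
  constructor
  · show (∑ i, f i)ᴴ = _
    rw [conjTranspose_sum]
    exact Finset.sum_congr rfl fun i _ => (h i).1
  · intro x
    have : (∑ i, f i) *ᵥ x = ∑ i, f i *ᵥ x := by
      ext j; simp [Matrix.mulVec, Matrix.sum_apply, dotProduct, Finset.sum_mul]
      rw [Finset.sum_comm]
    have h2 : star x ⬝ᵥ ∑ i, f i *ᵥ x = ∑ i, star x ⬝ᵥ (f i *ᵥ x) := by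
      simp only [dotProduct, Finset.sum_apply, Finset.mul_sum]
      rw [Finset.sum_comm]
    rw [this, h2]
    exact Finset.sum_nonneg fun i _ => (h i).dotProduct_mulVec_nonneg x

open Matrix in
lemma psd_trace_re_nonneg {p : ℕ} {S : Matrix (Fin p) (Fin p) ℂ} (hS : S.PosSemidef) :
    0 ≤ (Matrix.trace S).re := by
  rw [Matrix.trace]
  rw [Complex.re_sum]
  refine Finset.sum_nonneg fun i _ => ?_
  have := (Complex.nonneg_iff.mp (hS.dotProduct_mulVec_nonneg (Pi.single i 1))).1
  simpa [dotProduct, Matrix.mulVec, Matrix.diag, Pi.single_apply,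
    Finset.sum_ite_eq, Finset.sum_ite_eq'] using this

/-- The channel `Φ(A) = ∑ i, K i * A * (K i)ᴴ` given by Kraus operators. -/
noncomputable def krausChannel {n m k : ℕ} (K : Fin k → Matrix (Fin m) (Fin n) ℂ)
    (A : Matrix (Fin n) (Fin n) ℂ) : Matrix (Fin m) (Fin m) ℂ :=
  ∑ i, K i * A * (K i)ᴴ

open Matrix in
lemma krausChannel_conjTranspose {n m k : ℕ} (K : Fin k → Matrix (Fin m) (Fin n) ℂ)
    (A : Matrix (Fin n) (Fin n) ℂ) :
    (krausChannel K A)ᴴ = krausChannel K Aᴴ := by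
  unfold krausChannel
  rw [conjTranspose_sum]
  refine Finset.sum_congr rfl fun i _ => ?_
  simp [Matrix.mul_assoc]

open Matrix in
lemma krausChannel_trace {n m k : ℕ} (K : Fin k → Matrix (Fin m) (Fin n) ℂ)
    (hK : ∑ i, (K i)ᴴ * K i = 1) (A : Matrix (Fin n) (Fin n) ℂ) :
    (krausChannel K A).trace = A.trace := by
  unfold krausChannel
  rw [Matrix.trace_sum]
  calc ∑ i, (K i * A * (K i)ᴴ).trace = ∑ i, ((K i)ᴴ * K i * A).trace := by
        refine Finset.sum_congr rfl fun i _ => ?_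
        rw [Matrix.trace_mul_cycle, Matrix.mul_assoc]
    _ = ((∑ i, (K i)ᴴ * K i) * A).trace := by
        rw [Finset.sum_mul, Matrix.trace_sum]
    _ = A.trace := by rw [hK, Matrix.one_mul]

/-- Lieb–Ruskai operator Schwarz inequality / DPI for the RLD
metric: for a CPTP map `Φ` (in Kraus form), an invertible positive `ρ` with
`Φ(ρ)` invertible, and any matrix `A`:
`Φ(A)ᴴ Φ(ρ)⁻¹ Φ(A) ≤ Φ(Aᴴ ρ⁻¹ A)` in the positive semidefinite order, and in
particular `tr(Φ(A)ᴴ Φ(ρ)⁻¹ Φ(A)) ≤ tr(Aᴴ ρ⁻¹ A)`. -/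
theorem stmt12 {n m k : ℕ} (K : Fin k → Matrix (Fin m) (Fin n) ℂ)
    (hK : ∑ i, (K i)ᴴ * K i = 1)
    (ρ : Matrix (Fin n) (Fin n) ℂ) (hρ : ρ.PosDef)
    (hΦρ : (krausChannel K ρ).PosDef)
    (A : Matrix (Fin n) (Fin n) ℂ) :
    (krausChannel K (Aᴴ * ρ⁻¹ * A)
        - (krausChannel K A)ᴴ * (krausChannel K ρ)⁻¹ * krausChannel K A).PosSemidef ∧
    (Matrix.trace ((krausChannel K A)ᴴ * (krausChannel K ρ)⁻¹ * krausChannel K A)).re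
      ≤ (Matrix.trace (Aᴴ * ρ⁻¹ * A)).re := by
  haveI : Invertible ρ := hρ.isUnit.invertible
  haveI : Invertible (krausChannel K ρ) := hΦρ.isUnit.invertible
  -- the small block matrix is PSD
  have hM : (Matrix.fromBlocks ρ A Aᴴ (Aᴴ * ρ⁻¹ * A)).PosSemidef := by
    rw [Matrix.PosDef.fromBlocks₁₁ A (Aᴴ * ρ⁻¹ * A) hρ]
    simpa using Matrix.PosSemidef.zero
  -- the transformed block matrix is PSD
  have hB : (Matrix.fromBlocks (krausChannel K ρ) (krausChannel K A)
      (krausChannel K Aᴴ) (krausChannel K (Aᴴ * ρ⁻¹ * A))).PosSemidef := by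
    have heq : Matrix.fromBlocks (krausChannel K ρ) (krausChannel K A)
        (krausChannel K Aᴴ) (krausChannel K (Aᴴ * ρ⁻¹ * A))
        = ∑ i, (Matrix.fromBlocks (K i) 0 0 (K i)) *
            (Matrix.fromBlocks ρ A Aᴴ (Aᴴ * ρ⁻¹ * A)) *
            (Matrix.fromBlocks (K i) 0 0 (K i))ᴴ := by
      unfold krausChannel
      rw [← sum_fromBlocks]
      refine Finset.sum_congr rfl fun i _ => ?_
      rw [Matrix.fromBlocks_conjTranspose, Matrix.fromBlocks_multiply,
        Matrix.fromBlocks_multiply]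
      simp
    rw [heq]
    exact posSemidef_sum _ fun i => hM.mul_mul_conjTranspose_same _
  have hAH : krausChannel K Aᴴ = (krausChannel K A)ᴴ :=
    (krausChannel_conjTranspose K A).symm
  rw [hAH] at hB
  have hmain := (Matrix.PosDef.fromBlocks₁₁ (krausChannel K A)
    (krausChannel K (Aᴴ * ρ⁻¹ * A)) hΦρ).mp hB
  refine ⟨hmain, ?_⟩
  have htr := psd_trace_re_nonneg hmain
  rw [Matrix.trace_sub, Complex.sub_re] at htr
  have hteq := krausChannel_trace K hK (Aᴴ * ρ⁻¹ * A)
  rw [hteq] at htr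
  linarith
end

section
/- Let p: [a,b] → (0,1) be smooth with nowhere-vanishing derivative, define r(θ) = exp(∫_a^θ ṗ(s)(1−2p(s))/(2p(s)(1−p(s))) ds), and choose ε with 0 < ε² < min_θ p(θ)(1−p(θ))/r(θ)². Then the 2×2 matrix family ρ_θ = [[p(θ), ε r(θ)],[ε r(θ), 1−p(θ)]] consists of positive-definite density matrices, and the diagonal matrix L_θ = diag(ṗ(θ)/p(θ), −ṗ(θ)/(1−p(θ))) satisfies the SLD equation ρ̇_θ = (1/2)(ρ_θ L_θ + L_θ ρ_θ). -/
open scoped Matrix ComplexOrder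

/-- `r(θ) = exp ∫_a^θ ṗ(s)(1−2p(s))/(2p(s)(1−p(s))) ds`, with `p'` the
derivative of `p`. -/
noncomputable def rFun (a : ℝ) (p p' : ℝ → ℝ) (θ : ℝ) : ℝ :=
  Real.exp (∫ s in a..θ, p' s * (1 - 2 * p s) / (2 * p s * (1 - p s)))

/-- The qubit family `ρ_θ = [[p(θ), ε r(θ)],[ε r(θ), 1−p(θ)]]`. -/
noncomputable def rhoFam (a : ℝ) (p p' : ℝ → ℝ) (ε : ℝ) (θ : ℝ) :
    Matrix (Fin 2) (Fin 2) ℂ :=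
  !![(p θ : ℂ), ((ε * rFun a p p' θ : ℝ) : ℂ);
     ((ε * rFun a p p' θ : ℝ) : ℂ), ((1 - p θ : ℝ) : ℂ)]

/-- The diagonal operator `L_θ = diag(ṗ(θ)/p(θ), −ṗ(θ)/(1−p(θ)))`. -/
noncomputable def LFam (p p' : ℝ → ℝ) (θ : ℝ) : Matrix (Fin 2) (Fin 2) ℂ :=
  Matrix.diagonal ![((p' θ / p θ : ℝ) : ℂ), ((-(p' θ / (1 - p θ)) : ℝ) : ℂ)]

/-! Since `L` is diagonal, `(ρL + Lρ)/2` has diagonal entries `p · ṗ/p = ṗ` and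
`(1 - p) · (-ṗ/(1 - p)) = -ṗ`, and off-diagonal entries `εr` times the mean `(L₀₀ + L₁₁)/2`. The
exponent defining `r` is `∫ (L₀₀ + L₁₁)/2`, so `(εr)' = εr (L₀₀ + L₁₁)/2` and the SLD equation
holds entrywise. As for positivity, `ρ` is Hermitian with trace `1` and determinant
`p(1 - p) - ε²r² > 0`, so both of its eigenvalues are positive. -/

namespace Matrix

theorem IsHermitian.posDef_of_re_trace_pos_of_re_det_pos {𝕜 : Type*} [RCLike 𝕜]
    {A : Matrix (Fin 2) (Fin 2) 𝕜} (hA : A.IsHermitian) (htr : 0 < RCLike.re A.trace)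
    (hdet : 0 < RCLike.re A.det) : A.PosDef := by
  have hsum : 0 < hA.eigenvalues 0 + hA.eigenvalues 1 := by
    rwa [hA.trace_eq_sum_eigenvalues, Fin.sum_univ_two, ← RCLike.ofReal_add,
      RCLike.ofReal_re] at htr
  have hprod : 0 < hA.eigenvalues 0 * hA.eigenvalues 1 := by
    rwa [hA.det_eq_prod_eigenvalues, Fin.prod_univ_two, ← RCLike.ofReal_mul,
      RCLike.ofReal_re] at hdet
  have hpos : 0 < hA.eigenvalues 0 ∧ 0 < hA.eigenvalues 1 :=
    (pos_and_pos_or_neg_and_neg_of_mul_pos hprod).resolve_right fun h => by linarith [h.1, h.2]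
  rw [hA.posDef_iff_eigenvalues_pos]
  exact Fin.forall_fin_two.2 hpos

theorem half_smul_mul_diagonal_add_diagonal_mul_fin_two {K : Type*} [Field K] [NeZero (2 : K)]
    (x y w z l₀ l₁ : K) :
    (1 / 2 : K) • (!![x, y; w, z] * diagonal ![l₀, l₁] + diagonal ![l₀, l₁] * !![x, y; w, z]) =
      !![x * l₀, y * ((l₀ + l₁) / 2); w * ((l₀ + l₁) / 2), z * l₁] := by
  have h2 : (2 : K) ≠ 0 := two_ne_zero
  rw [diagonal_fin_two, mul_fin_two, mul_fin_two]
  ext i j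
  fin_cases i <;> fin_cases j <;> simp <;> field_simp <;> ring

end Matrix

theorem ContinuousOn.hasDerivWithinAt_intervalIntegral_Icc {E : Type*} [NormedAddCommGroup E]
    [NormedSpace ℝ E] [CompleteSpace E] {g : ℝ → E} {a b θ : ℝ}
    (hg : ContinuousOn g (Set.Icc a b)) (hθ : θ ∈ Set.Icc a b) :
    HasDerivWithinAt (fun t => ∫ s in a..t, g s) (g θ) (Set.Icc a b) θ := by
  have : Fact (θ ∈ Set.Icc a b) := ⟨hθ⟩
  refine intervalIntegral.integral_hasDerivWithinAt_right ?_
    (hg.stronglyMeasurableAtFilter_nhdsWithin measurableSet_Icc θ) (hg θ hθ)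
  refine (hg.mono ?_).intervalIntegrable
  rw [Set.uIcc_of_le hθ.1]
  exact Set.Icc_subset_Icc_right hθ.2

section Family

variable {a b : ℝ} {p p' : ℝ → ℝ}

theorem hasDerivWithinAt_rFun (hp : ∀ θ ∈ Set.Icc a b, 0 < p θ ∧ p θ < 1)
    (hderiv : ∀ θ ∈ Set.Icc a b, HasDerivWithinAt p (p' θ) (Set.Icc a b) θ)
    (hp'cont : ContinuousOn p' (Set.Icc a b)) {θ : ℝ} (hθ : θ ∈ Set.Icc a b) :
    HasDerivWithinAt (rFun a p p')
      (rFun a p p' θ * ((p' θ / p θ + -(p' θ / (1 - p θ))) / 2)) (Set.Icc a b) θ := by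
  have hpcont : ContinuousOn p (Set.Icc a b) := fun t ht => (hderiv t ht).continuousWithinAt
  have hcont : ContinuousOn (fun s => p' s * (1 - 2 * p s) / (2 * p s * (1 - p s)))
      (Set.Icc a b) := by
    refine (hp'cont.mul (by fun_prop)).div (by fun_prop) fun t ht => ?_
    obtain ⟨h0, h1⟩ := hp t ht
    have : 0 < 1 - p t := by linarith
    positivity
  have hmean : p' θ * (1 - 2 * p θ) / (2 * p θ * (1 - p θ)) =
      (p' θ / p θ + -(p' θ / (1 - p θ))) / 2 := by
    obtain ⟨h0, h1⟩ := hp θ hθ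
    have : 1 - p θ ≠ 0 := by linarith
    field_simp
    ring
  exact hmean ▸ (hcont.hasDerivWithinAt_intervalIntegral_Icc hθ).exp

theorem rhoFam_trace (ε θ : ℝ) : (rhoFam a p p' ε θ).trace = 1 := by
  simp [rhoFam, Matrix.trace_fin_two]

theorem rhoFam_posDef {ε θ : ℝ} (hεθ : ε ^ 2 < p θ * (1 - p θ) / rFun a p p' θ ^ 2) :
    (rhoFam a p p' ε θ).PosDef := by
  have hdet : (ε * rFun a p p' θ) ^ 2 < p θ * (1 - p θ) := by
    have hr : 0 < rFun a p p' θ ^ 2 := pow_pos (Real.exp_pos _) 2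
    rwa [mul_pow, ← lt_div_iff₀ hr]
  have hre_det :
      RCLike.re (rhoFam a p p' ε θ).det = p θ * (1 - p θ) - (ε * rFun a p p' θ) ^ 2 := by
    simp [rhoFam, Matrix.det_fin_two]
    ring
  refine Matrix.IsHermitian.posDef_of_re_trace_pos_of_re_det_pos ?_ ?_ ?_
  · ext i j
    fin_cases i <;> fin_cases j <;> simp [rhoFam]
  · simp [rhoFam_trace]
  · rw [hre_det]
    linarith

end Family

theorem stmt13_general (a b : ℝ) (p p' : ℝ → ℝ) (ε : ℝ)
    (hp : ∀ θ ∈ Set.Icc a b, 0 < p θ ∧ p θ < 1)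
    (hderiv : ∀ θ ∈ Set.Icc a b, HasDerivWithinAt p (p' θ) (Set.Icc a b) θ)
    (hp'cont : ContinuousOn p' (Set.Icc a b))
    (hεlt : ∀ θ ∈ Set.Icc a b, ε ^ 2 < p θ * (1 - p θ) / (rFun a p p' θ) ^ 2) :
    ∀ θ ∈ Set.Icc a b,
      (rhoFam a p p' ε θ).PosDef ∧ (rhoFam a p p' ε θ).trace = 1 ∧
      ∀ i j, HasDerivWithinAt (fun t => rhoFam a p p' ε t i j)
        (((1 / 2 : ℂ) • (rhoFam a p p' ε θ * LFam p p' θ + LFam p p' θ * rhoFam a p p' ε θ)) i j)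
        (Set.Icc a b) θ := by
  intro θ hθ
  refine ⟨rhoFam_posDef (hεlt θ hθ), rhoFam_trace ε θ, fun i j => ?_⟩
  obtain ⟨hp0, hp1⟩ := hp θ hθ
  have hpθ : (p θ : ℂ) ≠ 0 := by exact_mod_cast hp0.ne'
  have hqθ : (1 - p θ : ℂ) ≠ 0 := by exact_mod_cast (sub_pos.2 hp1).ne'
  have hr := ((hasDerivWithinAt_rFun hp hderiv hp'cont hθ).const_mul ε).ofReal_comp
  rw [rhoFam, LFam, Matrix.half_smul_mul_diagonal_add_diagonal_mul_fin_two]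
  fin_cases i <;> fin_cases j
  · exact (hderiv θ hθ).ofReal_comp.congr_deriv (by simp [field])
  · exact hr.congr_deriv (by simp; ring)
  · exact hr.congr_deriv (by simp; ring)
  · exact ((hderiv θ hθ).const_sub 1).ofReal_comp.congr_deriv (by simp [field])

/-- for a smooth `p : [a,b] → (0,1)` with nowhere-vanishing
derivative `p'`, `r` as above, and `ε` with
`0 < ε² < min_θ p(θ)(1−p(θ))/r(θ)²`, the family `ρ_θ` consists of
positive-definite density matrices and the diagonal matrix `L_θ` satisfies the
SLD equation `ρ̇_θ = (1/2)(ρ_θ L_θ + L_θ ρ_θ)` (entrywise derivative within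
`[a,b]`). -/
theorem stmt13 (a b : ℝ) (hab : a < b) (p p' : ℝ → ℝ) (ε : ℝ)
    (hp : ∀ θ ∈ Set.Icc a b, 0 < p θ ∧ p θ < 1)
    (hderiv : ∀ θ ∈ Set.Icc a b, HasDerivWithinAt p (p' θ) (Set.Icc a b) θ)
    (hp'cont : ContinuousOn p' (Set.Icc a b))
    (hp'ne : ∀ θ ∈ Set.Icc a b, p' θ ≠ 0)
    (hε : 0 < ε ^ 2)
    (hεlt : ∀ θ ∈ Set.Icc a b, ε ^ 2 < p θ * (1 - p θ) / (rFun a p p' θ) ^ 2) :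
    ∀ θ ∈ Set.Icc a b,
      (rhoFam a p p' ε θ).PosDef ∧ (rhoFam a p p' ε θ).trace = 1 ∧
      ∀ i j, HasDerivWithinAt (fun t => rhoFam a p p' ε t i j)
        (((1 / 2 : ℂ) • (rhoFam a p p' ε θ * LFam p p' θ + LFam p p' θ * rhoFam a p p' ε θ)) i j)
        (Set.Icc a b) θ :=
  stmt13_general a b p p' ε hp hderiv hp'cont hεlt
end

section
/- If ρ ≤ Cσ for positive-definite density operators ρ, σ and constant C > 0, then for all matrices X: ⟨X, (J_ρ^{BKM})^{-1}X⟩ ≤ C⟨X, (J_σ^{BKM})^{-1}X⟩, where (J_τ^{BKM})^{-1}(X) = ∫₀¹ τ^t X τ^{1−t} dt. -/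
/-!
By the Löwner–Heinz theorem (`CFC.rpow_le_rpow`), `ρ ≤ Cσ` gives `ρ^t ≤ (Cσ)^t = C^t σ^t`
for every `t ∈ [0, 1]`. As `(A, B) ↦ tr(Xᴴ A X B)` is monotone in each argument on positive
matrices, the integrand for `ρ` at `t` is bounded by `C^t C^(1-t) = C` times the integrand
for `σ`, and the inequality integrates over `[0, 1]`. To apply Löwner–Heinz, the spectral
powers `matRpow` are identified with the continuous functional calculus: for a unitary `U`,
`cfc f (U diag(λ) Uᴴ) = U diag(f ∘ λ) Uᴴ`.
-/

open scoped Matrix ComplexOrder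

/-- The real power `ρ^t` of the positive matrix `ρ = U diag(λ) Uᴴ`, defined via
the spectral decomposition. -/
noncomputable def matRpow {d : ℕ} (U : Matrix (Fin d) (Fin d) ℂ)
    (lam : Fin d → ℝ) (t : ℝ) : Matrix (Fin d) (Fin d) ℂ :=
  U * Matrix.diagonal (fun i => ((lam i ^ t : ℝ) : ℂ)) * Uᴴ

open scoped MatrixOrder

section Unitary

variable {A : Type*} [Ring A] [StarRing A] [TopologicalSpace A] [IsTopologicalRing A]
  [Algebra ℝ A] [ContinuousFunctionalCalculus ℝ A IsSelfAdjoint] [ContinuousMap.UniqueHom ℝ A]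

lemma cfc_unitary_conj (f : ℝ → ℝ) (u : unitary A) (a : A)
    (hf : ContinuousOn f (spectrum ℝ a) := by cfc_cont_tac) (ha : IsSelfAdjoint a := by cfc_tac) :
    cfc f ((u : A) * a * star (u : A)) = u * cfc f a * star (u : A) := by
  have hφ : Continuous (Unitary.conjStarAlgAut ℝ A u) :=
    show Continuous fun x : A => (u : A) * x * star (u : A) by fun_prop
  exact ((Unitary.conjStarAlgAut ℝ A u).toStarAlgHom.map_cfc f a hf hφ ha
    (ha.conjugate (u : A))).symm

end Unitary

namespace Matrix

variable {m n 𝕜 : Type*} [DecidableEq n] [RCLike 𝕜]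

lemma isSelfAdjoint_diagonal_ofReal (d : n → ℝ) :
    IsSelfAdjoint (diagonal fun i => (d i : 𝕜)) := by
  simp [IsSelfAdjoint, star_eq_conjTranspose, diagonal_conjTranspose, Pi.star_def]

variable [Fintype m] [Fintype n]

lemma spectrum_real_diagonal (d : n → ℝ) :
    spectrum ℝ (diagonal fun i => (d i : 𝕜)) = Set.range d := by
  rw [← spectrum.preimage_algebraMap 𝕜, spectrum_diagonal]
  ext x
  simp [RCLike.algebraMap_eq_ofReal]

lemma aeval_diagonal (p : Polynomial ℝ) (v : n → 𝕜) :
    Polynomial.aeval (diagonal v) p = diagonal fun i => Polynomial.aeval (v i) p := by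
  rw [show diagonal v = diagonalAlgHom ℝ v from rfl, Polynomial.aeval_algHom_apply,
    Polynomial.aeval_pi_apply]
  rfl

lemma cfc_diagonal (f : ℝ → ℝ) (d : n → ℝ) :
    cfc f (diagonal fun i => (d i : 𝕜)) = diagonal fun i => (f (d i) : 𝕜) := by
  classical
  -- Lagrange interpolation turns `f` into a polynomial on the finite spectrum.
  set p := Lagrange.interpolate (Finset.univ.image d) id f
  have hp : ∀ i, p.eval (d i) = f (d i) := fun i =>
    Lagrange.eval_interpolate_at_node (v := id) f (Set.injOn_id _)
      (Finset.mem_image_of_mem d (Finset.mem_univ i))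
  rw [← cfc_congr (f := fun x => p.eval x),
    cfc_polynomial p _ (isSelfAdjoint_diagonal_ofReal d), aeval_diagonal]
  · congr! 2 with i
    simpa [hp] using Polynomial.aeval_algebraMap_apply 𝕜 (d i) p
  · rw [spectrum_real_diagonal]
    rintro _ ⟨i, rfl⟩
    exact hp i

lemma cfc_unitary_conj_diagonal (f : ℝ → ℝ) {U : Matrix n n 𝕜} (hU : Uᴴ * U = 1)
    (d : n → ℝ) :
    cfc f (U * diagonal (fun i => (d i : 𝕜)) * Uᴴ)
      = U * diagonal (fun i => (f (d i) : 𝕜)) * Uᴴ := by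
  let u : unitary (Matrix n n 𝕜) := ⟨U, Unitary.mem_iff.mpr ⟨hU, mul_eq_one_comm.mp hU⟩⟩
  rw [← cfc_diagonal]
  exact cfc_unitary_conj f u _ (finite_real_spectrum.continuousOn f)
    (isSelfAdjoint_diagonal_ofReal d)

lemma mul_diagonal_mul_conjTranspose_nonneg (U : Matrix m n 𝕜) {d : n → ℝ}
    (hd : ∀ i, 0 ≤ d i) :
    0 ≤ U * diagonal (fun i => (d i : 𝕜)) * Uᴴ :=
  nonneg_iff_posSemidef.mpr <| (posSemidef_diagonal_iff.mpr fun i =>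
    RCLike.ofReal_nonneg.mpr (hd i)).mul_mul_conjTranspose_same U

lemma trace_mul_nonneg {P Q : Matrix n n 𝕜} (hP : 0 ≤ P) (hQ : 0 ≤ Q) :
    0 ≤ (P * Q).trace := by
  rw [← CFC.sqrt_mul_sqrt_self Q hQ, ← mul_assoc, trace_mul_cycle]
  exact (nonneg_iff_posSemidef.mp
    ((CFC.sqrt_nonneg Q).isSelfAdjoint.conjugate_nonneg hP)).trace_nonneg

lemma trace_conjTranspose_mul_mul_nonneg {P : Matrix m m 𝕜} {Q : Matrix n n 𝕜} (hP : 0 ≤ P)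
    (hQ : 0 ≤ Q) (X : Matrix m n 𝕜) : 0 ≤ (Xᴴ * P * X * Q).trace :=
  trace_mul_nonneg
    (nonneg_iff_posSemidef.mpr ((nonneg_iff_posSemidef.mp hP).conjTranspose_mul_mul_same X)) hQ

lemma trace_conjTranspose_mul_mul_mono {P P' : Matrix m m 𝕜} {Q Q' : Matrix n n 𝕜}
    (hP : 0 ≤ P) (hQ' : 0 ≤ Q') (hPP' : P ≤ P') (hQQ' : Q ≤ Q') (X : Matrix m n 𝕜) :
    (Xᴴ * P * X * Q).trace ≤ (Xᴴ * P' * X * Q').trace := by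
  have hsplit : (Xᴴ * P' * X * Q').trace - (Xᴴ * P * X * Q).trace
      = (Xᴴ * (P' - P) * X * Q').trace + (Xᴴ * P * X * (Q' - Q)).trace := by
    simp only [Matrix.mul_sub, Matrix.sub_mul, trace_sub]
    abel
  rw [← sub_nonneg, hsplit]
  exact add_nonneg (trace_conjTranspose_mul_mul_nonneg (sub_nonneg.mpr hPP') hQ' X)
    (trace_conjTranspose_mul_mul_nonneg hP (sub_nonneg.mpr hQQ') X)

end Matrix

section matRpow

open Matrix

variable {d : ℕ} {U V : Matrix (Fin d) (Fin d) ℂ} {lam mu : Fin d → ℝ}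

lemma matRpow_eq_rpow (hU : Uᴴ * U = 1) (hlam : ∀ i, 0 ≤ lam i) (t : ℝ) :
    matRpow U lam t = (U * diagonal (fun i => (lam i : ℂ)) * Uᴴ) ^ t := by
  have hnonneg := mul_diagonal_mul_conjTranspose_nonneg (𝕜 := ℂ) U hlam
  have hcfc := cfc_unitary_conj_diagonal (𝕜 := ℂ) (· ^ t) hU lam
  -- the `RCLike` coercion `ℝ → ℂ` is `Complex.ofReal` only after unfolding
  simp only [RCLike.ofReal_eq_complex_ofReal] at hnonneg hcfc
  rw [CFC.rpow_eq_cfc_real hnonneg, hcfc]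
  rfl

lemma matRpow_nonneg (hU : Uᴴ * U = 1) (hlam : ∀ i, 0 ≤ lam i) (t : ℝ) :
    0 ≤ matRpow U lam t := by
  rw [matRpow_eq_rpow hU hlam]
  exact CFC.rpow_nonneg

open scoped Matrix.Norms.L2Operator in
lemma matRpow_le_matRpow (hU : Uᴴ * U = 1) (hV : Vᴴ * V = 1) (hlam : ∀ i, 0 ≤ lam i)
    (hmu : ∀ i, 0 ≤ mu i)
    (hle : U * diagonal (fun i => (lam i : ℂ)) * Uᴴ
      ≤ V * diagonal (fun i => (mu i : ℂ)) * Vᴴ)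
    {t : ℝ} (ht : t ∈ Set.Icc (0 : ℝ) 1) : matRpow U lam t ≤ matRpow V mu t := by
  rw [matRpow_eq_rpow hU hlam, matRpow_eq_rpow hV hmu]
  exact CFC.rpow_le_rpow ht hle

lemma matRpow_const_mul (hlam : ∀ i, 0 ≤ lam i) {c : ℝ} (hc : 0 ≤ c) (t : ℝ) :
    matRpow U (fun i => c * lam i) t = ((c ^ t : ℝ) : ℂ) • matRpow U lam t := by
  have hdiag : (fun i => (((c * lam i) ^ t : ℝ) : ℂ))
      = ((c ^ t : ℝ) : ℂ) • fun i => ((lam i ^ t : ℝ) : ℂ) := by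
    ext i
    simp [Real.mul_rpow hc (hlam i)]
  simp only [matRpow, hdiag, diagonal_smul, Matrix.mul_smul, Matrix.smul_mul]

lemma continuous_re_trace_matRpow_sandwich (hlam : ∀ i, 0 < lam i)
    (X : Matrix (Fin d) (Fin d) ℂ) :
    Continuous fun t => (trace (Xᴴ * matRpow U lam t * X * matRpow U lam (1 - t))).re := by
  unfold matRpow
  fun_prop (disch := exact (hlam _).ne')

lemma re_trace_matRpow_sandwich_le (hU : Uᴴ * U = 1) (hV : Vᴴ * V = 1)
    (hlam : ∀ i, 0 ≤ lam i) (hmu : ∀ i, 0 ≤ mu i) {C : ℝ} (hC : 0 < C)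
    (hle : U * diagonal (fun i => (lam i : ℂ)) * Uᴴ
      ≤ (C : ℂ) • (V * diagonal (fun i => (mu i : ℂ)) * Vᴴ))
    (X : Matrix (Fin d) (Fin d) ℂ) {t : ℝ} (ht : t ∈ Set.Icc (0 : ℝ) 1) :
    (trace (Xᴴ * matRpow U lam t * X * matRpow U lam (1 - t))).re
      ≤ C * (trace (Xᴴ * matRpow V mu t * X * matRpow V mu (1 - t))).re := by
  have hCmu : ∀ i, 0 ≤ C * mu i := fun i => mul_nonneg hC.le (hmu i)
  have hle' : U * diagonal (fun i => (lam i : ℂ)) * Uᴴ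
      ≤ V * diagonal (fun i => ((C * mu i : ℝ) : ℂ)) * Vᴴ := by
    convert hle using 1
    rw [← Matrix.smul_mul, ← Matrix.mul_smul, ← diagonal_smul]
    congr 3
    ext i
    simp
  have ht' : 1 - t ∈ Set.Icc (0 : ℝ) 1 := ⟨by linarith [ht.2], by linarith [ht.1]⟩
  have key := trace_conjTranspose_mul_mul_mono (matRpow_nonneg hU hlam t)
    (matRpow_nonneg hV hCmu (1 - t)) (matRpow_le_matRpow hU hV hlam hCmu hle' ht)
    (matRpow_le_matRpow hU hV hlam hCmu hle' ht') X
  rw [matRpow_const_mul hmu hC.le, matRpow_const_mul hmu hC.le] at key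
  simp only [Matrix.mul_smul, Matrix.smul_mul, trace_smul, smul_smul, smul_eq_mul] at key
  rw [← Complex.ofReal_mul, ← Real.rpow_add hC, sub_add_cancel, Real.rpow_one] at key
  simpa using Complex.re_le_re key

end matRpow

theorem stmt17_general {d : ℕ} (ρ σ : Matrix (Fin d) (Fin d) ℂ) (C : ℝ) (hC : 0 < C)
    (hle : ((C : ℂ) • σ - ρ).PosSemidef)
    (Uρ Uσ : Matrix (Fin d) (Fin d) ℂ) (lamρ lamσ : Fin d → ℝ)
    (hUρ : Uρᴴ * Uρ = 1) (hlamρ : ∀ i, 0 < lamρ i)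
    (hspecρ : ρ = Uρ * Matrix.diagonal (fun i => (lamρ i : ℂ)) * Uρᴴ)
    (hUσ : Uσᴴ * Uσ = 1) (hlamσ : ∀ i, 0 < lamσ i)
    (hspecσ : σ = Uσ * Matrix.diagonal (fun i => (lamσ i : ℂ)) * Uσᴴ)
    (X : Matrix (Fin d) (Fin d) ℂ) :
    (∫ t in (0:ℝ)..1,
        (Matrix.trace (Xᴴ * matRpow Uρ lamρ t * X * matRpow Uρ lamρ (1 - t))).re)
      ≤ C * ∫ t in (0:ℝ)..1,
        (Matrix.trace (Xᴴ * matRpow Uσ lamσ t * X * matRpow Uσ lamσ (1 - t))).re := by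
  have hρσ : ρ ≤ (C : ℂ) • σ := Matrix.le_iff.mpr hle
  subst hspecρ hspecσ
  rw [← intervalIntegral.integral_const_mul]
  exact intervalIntegral.integral_mono_on zero_le_one
    ((continuous_re_trace_matRpow_sandwich hlamρ X).intervalIntegrable 0 1)
    ((continuous_const.mul
      (continuous_re_trace_matRpow_sandwich hlamσ X)).intervalIntegrable 0 1)
    fun t ht => re_trace_matRpow_sandwich_le hUρ hUσ (fun i => (hlamρ i).le)
      (fun i => (hlamσ i).le) hC hρσ X ht

/-- if `ρ ≤ Cσ` for positive-definite density operators `ρ`, `σ`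
(with spectral decompositions `ρ = Uρ diag(λρ) Uρᴴ`, `σ = Uσ diag(λσ) Uσᴴ`) and
`C > 0`, then for all matrices `X`,
`⟨X, (J_ρ^{BKM})⁻¹X⟩ ≤ C ⟨X, (J_σ^{BKM})⁻¹X⟩`, i.e.
`∫₀¹ tr(Xᴴ ρ^t X ρ^{1−t}) dt ≤ C ∫₀¹ tr(Xᴴ σ^t X σ^{1−t}) dt`. -/
theorem stmt17 {d : ℕ} (ρ σ : Matrix (Fin d) (Fin d) ℂ) (C : ℝ) (hC : 0 < C)
    (hρ : ρ.PosDef) (hρtr : ρ.trace = 1)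
    (hσ : σ.PosDef) (hσtr : σ.trace = 1)
    (hle : ((C : ℂ) • σ - ρ).PosSemidef)
    (Uρ Uσ : Matrix (Fin d) (Fin d) ℂ) (lamρ lamσ : Fin d → ℝ)
    (hUρ : Uρᴴ * Uρ = 1) (hlamρ : ∀ i, 0 < lamρ i)
    (hspecρ : ρ = Uρ * Matrix.diagonal (fun i => (lamρ i : ℂ)) * Uρᴴ)
    (hUσ : Uσᴴ * Uσ = 1) (hlamσ : ∀ i, 0 < lamσ i)
    (hspecσ : σ = Uσ * Matrix.diagonal (fun i => (lamσ i : ℂ)) * Uσᴴ)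
    (X : Matrix (Fin d) (Fin d) ℂ) :
    (∫ t in (0:ℝ)..1,
        (Matrix.trace (Xᴴ * matRpow Uρ lamρ t * X * matRpow Uρ lamρ (1 - t))).re)
      ≤ C * ∫ t in (0:ℝ)..1,
        (Matrix.trace (Xᴴ * matRpow Uσ lamσ t * X * matRpow Uσ lamσ (1 - t))).re :=
  stmt17_general ρ σ C hC hle Uρ Uσ lamρ lamσ hUρ hlamρ hspecρ hUσ hlamσ hspecσ X
end
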